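/- If Ap(S) is β-rectangular, then the unique maximal element of (Ap(S), ⪯_M) is f + m = Σ_{i=2}^ν β_i g_i, and every ω ∈ Ap(S) satisfies ω ⪯_M f + m. -/

import Mathlib

open Finset

/-- `S` is a numerical semigroup: a submonoid of `(ℕ, +)` with finite complement. -/
def IsNumSgp (S : Set ℕ) : Prop :=
  0 ∈ S ∧ (∀ a ∈ S, ∀ b ∈ S, a + b ∈ S) ∧ (Sᶜ : Set ℕ).Finite

/-- `s` belongs to the Apéry set of `S` with respect to `m`:
`s ∈ S` and `s - m ∉ S` (i.e. no `u ∈ S` with `u + m = s`). -/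
def InApery (S : Set ℕ) (m s : ℕ) : Prop :=
  s ∈ S ∧ ∀ u ∈ S, u + m ≠ s

def AperySet (S : Set ℕ) (m : ℕ) : Set ℕ := {s | InApery S m s}

/-- `ordS S s` is the largest `h` such that `s` is a sum of `h` nonzero elements of `S`. -/
noncomputable def ordS (S : Set ℕ) (s : ℕ) : ℕ :=
  sSup {h : ℕ | ∃ f : Fin h → ℕ, (∀ j, f j ∈ S ∧ f j ≠ 0) ∧ ∑ j, f j = s}

/-- `g` generates `S`. -/
def Generates (S : Set ℕ) {ν : ℕ} (g : Fin ν → ℕ) : Prop :=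
  ∀ s, s ∈ S ↔ ∃ lam : Fin ν → ℕ, ∑ i, lam i * g i = s

/-- `g` is a minimal generating system of `S`: it generates `S`
and no `g i` is generated by the remaining generators. -/
def MinimalGen (S : Set ℕ) {ν : ℕ} (g : Fin ν → ℕ) : Prop :=
  Generates S g ∧ ∀ i, ¬ ∃ lam : Fin ν → ℕ, lam i = 0 ∧ ∑ j, lam j * g j = g i

/-- `lam` is a maximal representation of `s`: the coefficient sum equals `ordS S s`. -/
def IsMaxRep (S : Set ℕ) {ν : ℕ} (g : Fin ν → ℕ) (lam : Fin ν → ℕ) (s : ℕ) : Prop :=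
  ∑ i, lam i * g i = s ∧ ∑ i, lam i = ordS S s

/-- `s` has a unique maximal representation. -/
def UniqueMaxRep (S : Set ℕ) {ν : ℕ} (g : Fin ν → ℕ) (s : ℕ) : Prop :=
  ∃! lam : Fin ν → ℕ, IsMaxRep S g lam s

/-- `β_i = max {h | h g_i ∈ Ap(S) and ord(h g_i) = h}`. -/
noncomputable def betaN (S : Set ℕ) (m : ℕ) {ν : ℕ} (g : Fin ν → ℕ) (i : Fin ν) : ℕ :=
  sSup {h : ℕ | InApery S m (h * g i) ∧ ordS S (h * g i) = h}

/-- `γ_i = max {h | h g_i ∈ Ap(S), ord(h g_i) = h and h g_i has a unique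
maximal representation}`. -/
noncomputable def gammaN (S : Set ℕ) (m : ℕ) {ν : ℕ} (g : Fin ν → ℕ) (i : Fin ν) : ℕ :=
  sSup {h : ℕ | InApery S m (h * g i) ∧ ordS S (h * g i) = h ∧ UniqueMaxRep S g (h * g i)}

/-- `B = {Σ_{i≥2} λ_i g_i : 0 ≤ λ_i ≤ β_i}`. -/
def Bset (S : Set ℕ) (m : ℕ) {ν : ℕ} [NeZero ν] (g : Fin ν → ℕ) : Set ℕ :=
  {s | ∃ lam : Fin ν → ℕ, lam 0 = 0 ∧ (∀ i, lam i ≤ betaN S m g i) ∧ ∑ i, lam i * g i = s}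

/-- `Γ = {Σ_{i≥2} λ_i g_i : 0 ≤ λ_i ≤ γ_i}`. -/
def GammaSet (S : Set ℕ) (m : ℕ) {ν : ℕ} [NeZero ν] (g : Fin ν → ℕ) : Set ℕ :=
  {s | ∃ lam : Fin ν → ℕ, lam 0 = 0 ∧ (∀ i, lam i ≤ gammaN S m g i) ∧ ∑ i, lam i * g i = s}

/-- `s ⪯_M t`. -/
def predM (S : Set ℕ) (s t : ℕ) : Prop :=
  ∃ u ∈ S, s + u = t ∧ ordS S s + ordS S u = ordS S t


/-!
Maximal representations control `⪯_M`: if `ω` and `t` have maximal representations `λ ≤ λ'`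
(coefficientwise), then `u = Σ (λ' - λ) g` witnesses `ω ⪯_M t`, because `ord` is superadditive
and bounded below by coefficient sums. A maximal representation of an Apéry element has
`λ_1 = 0` and `λ_i ≤ β_i`, since each `λ_i g_i` is again an Apéry element of order `λ_i`.
β-rectangularity puts `Σ β_i g_i` in `Ap(S)`, whose largest element is `f + m`, while `f + m`
is itself a combination with `λ_i ≤ β_i`; so `f + m = Σ β_i g_i`, the β-vector is its maximal
representation, and it dominates a maximal representation of every Apéry element.
-/

section Order

variable {S : Set ℕ}

def ordSet (S : Set ℕ) (s : ℕ) : Set ℕ :=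
  {h : ℕ | ∃ f : Fin h → ℕ, (∀ j, f j ∈ S ∧ f j ≠ 0) ∧ ∑ j, f j = s}

theorem mem_ordSet_iff {s h : ℕ} :
    h ∈ ordSet S s ↔
      ∃ M : Multiset ℕ, Multiset.card M = h ∧ (∀ x ∈ M, x ∈ S ∧ x ≠ 0) ∧ M.sum = s := by
  constructor
  · rintro ⟨f, hf, rfl⟩
    refine ⟨Multiset.map f univ.val, by simp, ?_, rfl⟩
    simp only [Multiset.mem_map]
    rintro _ ⟨j, -, rfl⟩
    exact hf j
  · rintro ⟨M, rfl, hM, rfl⟩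
    obtain ⟨l, rfl⟩ := Quot.exists_rep M
    exact ⟨l.get, fun j => hM _ (List.get_mem l j), Fin.sum_univ_getElem l⟩

theorem le_of_mem_ordSet {s h : ℕ} (hh : h ∈ ordSet S s) : h ≤ s := by
  obtain ⟨f, hf, rfl⟩ := hh
  calc h = ∑ _j : Fin h, 1 := by simp
    _ ≤ ∑ j, f j := sum_le_sum fun j _ => Nat.one_le_iff_ne_zero.2 (hf j).2

theorem bddAbove_ordSet (s : ℕ) : BddAbove (ordSet S s) :=
  ⟨s, fun _ => le_of_mem_ordSet⟩

theorem ordS_le_self (s : ℕ) : ordS S s ≤ s :=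
  csSup_le' fun _ => le_of_mem_ordSet

theorem le_ordS {s h : ℕ} (hh : h ∈ ordSet S s) : h ≤ ordS S s :=
  le_csSup (bddAbove_ordSet s) hh

theorem ordS_mem_ordSet {s : ℕ} (hs : s ∈ S) : ordS S s ∈ ordSet S s := by
  refine Nat.sSup_mem ?_ (bddAbove_ordSet s)
  rcases eq_or_ne s 0 with rfl | hs0
  · exact ⟨0, Fin.elim0, fun j => j.elim0, by simp⟩
  · exact ⟨1, fun _ => s, fun _ => ⟨hs, hs0⟩, by simp⟩

theorem ordS_add_le {a b : ℕ} (ha : a ∈ S) (hb : b ∈ S) :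
    ordS S a + ordS S b ≤ ordS S (a + b) := by
  obtain ⟨M, hMc, hM, rfl⟩ := mem_ordSet_iff.1 (ordS_mem_ordSet ha)
  obtain ⟨N, hNc, hN, rfl⟩ := mem_ordSet_iff.1 (ordS_mem_ordSet hb)
  refine hMc ▸ hNc ▸ le_ordS (mem_ordSet_iff.2
    ⟨M + N, Multiset.card_add M N, ?_, Multiset.sum_add M N⟩)
  simp only [Multiset.mem_add]
  rintro x (hx | hx)
  exacts [hM x hx, hN x hx]

end Order

section Representation

variable {S : Set ℕ} {ν : ℕ} {g : Fin ν → ℕ}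

theorem MinimalGen.ne_zero (hgen : MinimalGen S g) (i : Fin ν) : g i ≠ 0 := fun hi =>
  hgen.2 i ⟨0, rfl, by simp [hi]⟩

theorem Generates.sum_mul_mem (hgen : Generates S g) (lam : Fin ν → ℕ) :
    ∑ i, lam i * g i ∈ S :=
  (hgen _).2 ⟨lam, rfl⟩

theorem sum_single_mul (i : Fin ν) (a : ℕ) :
    ∑ j, (Pi.single i a : Fin ν → ℕ) j * g j = a * g i := by
  simp [Pi.single_apply]

theorem Generates.mem (hgen : Generates S g) (i : Fin ν) : g i ∈ S := by
  simpa [sum_single_mul] using hgen.sum_mul_mem (Pi.single i 1)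

theorem sum_mul_eq_add_sum_sub_mul {lam lam' : Fin ν → ℕ} (hle : lam ≤ lam') (w : Fin ν → ℕ) :
    ∑ i, lam' i * w i = ∑ i, lam i * w i + ∑ i, (lam' - lam) i * w i := by
  rw [← sum_add_distrib]
  refine sum_congr rfl fun i _ => ?_
  rw [← add_mul, Pi.sub_apply, Nat.add_sub_cancel' (hle i)]

theorem sum_eq_add_sum_sub {lam lam' : Fin ν → ℕ} (hle : lam ≤ lam') :
    ∑ i, lam' i = ∑ i, lam i + ∑ i, (lam' - lam) i := by
  simpa using sum_mul_eq_add_sum_sub_mul hle (fun _ => 1)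

theorem one_le_sum_of_sum_mul_ne_zero {lam : Fin ν → ℕ} (h : ∑ i, lam i * g i ≠ 0) :
    1 ≤ ∑ i, lam i := by
  by_contra! h0
  simp_all [sum_eq_zero_iff]

theorem Generates.add_mem (hgen : Generates S g) {a b : ℕ} (ha : a ∈ S) (hb : b ∈ S) :
    a + b ∈ S := by
  obtain ⟨μ, rfl⟩ := (hgen a).1 ha
  obtain ⟨μ', rfl⟩ := (hgen b).1 hb
  simpa [add_mul, sum_add_distrib] using hgen.sum_mul_mem (μ + μ')

theorem single_le_of_le_apply {ι : Type*} [DecidableEq ι] {lam : ι → ℕ} {i : ι} {a : ℕ}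
    (h : a ≤ lam i) : Pi.single i a ≤ lam := by
  intro j
  rcases eq_or_ne j i with rfl | hj
  · simpa using h
  · simp [hj]

theorem Generates.exists_add_eq_sum_mul (hgen : Generates S g) {lam : Fin ν → ℕ} {i : Fin ν}
    (hi : lam i ≠ 0) : ∃ u ∈ S, u + g i = ∑ j, lam j * g j := by
  have hle : Pi.single i 1 ≤ lam := single_le_of_le_apply (Nat.one_le_iff_ne_zero.2 hi)
  refine ⟨_, hgen.sum_mul_mem (lam - Pi.single i 1), ?_⟩
  rw [sum_mul_eq_add_sum_sub_mul hle, sum_single_mul, one_mul, add_comm]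

end Representation

section MaximalRepresentation

variable {S : Set ℕ} {ν : ℕ} {g : Fin ν → ℕ}

theorem sum_mem_ordSet (hgS : ∀ i, g i ∈ S) (hg0 : ∀ i, g i ≠ 0) (lam : Fin ν → ℕ) :
    ∑ i, lam i ∈ ordSet S (∑ i, lam i * g i) := by
  refine mem_ordSet_iff.2 ⟨∑ i, Multiset.replicate (lam i) (g i), by simp, ?_,
    by simp [Multiset.sum_sum]⟩
  intro x hx
  obtain ⟨i, -, hxi⟩ := Multiset.mem_sum.1 hx
  rw [Multiset.eq_of_mem_replicate hxi]
  exact ⟨hgS i, hg0 i⟩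

theorem sum_le_ordS (hgS : ∀ i, g i ∈ S) (hg0 : ∀ i, g i ≠ 0) (lam : Fin ν → ℕ) :
    ∑ i, lam i ≤ ordS S (∑ i, lam i * g i) :=
  le_ordS (sum_mem_ordSet hgS hg0 lam)

theorem Generates.exists_sum_mul_eq_multiset_sum (hgen : Generates S g) (M : Multiset ℕ)
    (hM : ∀ x ∈ M, x ∈ S ∧ x ≠ 0) :
    ∃ lam : Fin ν → ℕ, ∑ i, lam i * g i = M.sum ∧ Multiset.card M ≤ ∑ i, lam i := by
  induction M using Multiset.induction_on with
  | empty => exact ⟨0, by simp, by simp⟩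
  | cons a M ih =>
    obtain ⟨ha, ha0⟩ := hM a (Multiset.mem_cons_self a M)
    obtain ⟨lam, hlam, hcard⟩ := ih fun x hx => hM x (Multiset.mem_cons_of_mem hx)
    obtain ⟨μ, hμ⟩ := (hgen a).1 ha
    have hμ1 : 1 ≤ ∑ i, μ i := one_le_sum_of_sum_mul_ne_zero (hμ ▸ ha0)
    refine ⟨μ + lam, ?_, ?_⟩
    · simp [add_mul, sum_add_distrib, hμ, hlam]
    · simp only [Multiset.card_cons, Pi.add_apply, sum_add_distrib]
      omega

theorem exists_isMaxRep (hgen : Generates S g) (hg0 : ∀ i, g i ≠ 0) {s : ℕ} (hs : s ∈ S) :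
    ∃ lam, IsMaxRep S g lam s := by
  obtain ⟨M, hcard, hM, rfl⟩ := mem_ordSet_iff.1 (ordS_mem_ordSet hs)
  obtain ⟨lam, hlam, hle⟩ := hgen.exists_sum_mul_eq_multiset_sum M hM
  refine ⟨lam, hlam, le_antisymm ?_ (hcard ▸ hle)⟩
  simpa [hlam] using sum_le_ordS hgen.mem hg0 lam

theorem IsMaxRep.of_le (hgen : Generates S g) (hg0 : ∀ i, g i ≠ 0) {lam lam' : Fin ν → ℕ}
    {s : ℕ} (h : IsMaxRep S g lam s) (hle : lam' ≤ lam) :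
    IsMaxRep S g lam' (∑ i, lam' i * g i) := by
  refine ⟨rfl, le_antisymm (sum_le_ordS hgen.mem hg0 lam') ?_⟩
  have hsuper := ordS_add_le (hgen.sum_mul_mem lam') (hgen.sum_mul_mem (lam - lam'))
  rw [← sum_mul_eq_add_sum_sub_mul hle, h.1, ← h.2, sum_eq_add_sum_sub hle] at hsuper
  have := sum_le_ordS hgen.mem hg0 (lam - lam')
  omega

theorem IsMaxRep.predM_of_le (hgen : Generates S g) (hg0 : ∀ i, g i ≠ 0)
    {lam lam' : Fin ν → ℕ} {s t : ℕ} (h : IsMaxRep S g lam s) (h' : IsMaxRep S g lam' t)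
    (hle : lam ≤ lam') : predM S s t := by
  have hsplit : s + ∑ i, (lam' - lam) i * g i = t := by
    rw [← h.1, ← h'.1, sum_mul_eq_add_sum_sub_mul hle]
  refine ⟨_, hgen.sum_mul_mem _, hsplit, le_antisymm ?_ ?_⟩
  · exact hsplit ▸ ordS_add_le (h.1 ▸ hgen.sum_mul_mem lam) (hgen.sum_mul_mem _)
  · rw [← h.2, ← h'.2, sum_eq_add_sum_sub hle]
    exact Nat.add_le_add_left (sum_le_ordS hgen.mem hg0 _) _

end MaximalRepresentation

section Apery

variable {S : Set ℕ} {m f : ℕ}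

theorem inApery_frobenius_add (hm : 0 < m) (hf : f ∉ S) (hfmax : ∀ n, f < n → n ∈ S) :
    InApery S m (f + m) :=
  ⟨hfmax _ (by omega), fun u hu hum => hf (Nat.add_right_cancel hum ▸ hu)⟩

theorem InApery.le_frobenius_add (hfmax : ∀ n, f < n → n ∈ S) {ω : ℕ}
    (hω : InApery S m ω) : ω ≤ f + m := by
  by_contra! h
  exact hω.2 (ω - m) (hfmax _ (by omega)) (by omega)

theorem InApery.of_add (hadd : ∀ a ∈ S, ∀ b ∈ S, a + b ∈ S) {a b : ℕ} (ha : a ∈ S)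
    (hb : b ∈ S) (h : InApery S m (a + b)) : InApery S m a :=
  ⟨ha, fun u hu hum => h.2 (u + b) (hadd _ hu _ hb) (by omega)⟩

variable {ν : ℕ} {g : Fin ν → ℕ}

theorem le_betaN (hfmax : ∀ n, f < n → n ∈ S) {i : Fin ν} {h : ℕ}
    (hA : InApery S m (h * g i)) (hord : ordS S (h * g i) = h) : h ≤ betaN S m g i := by
  refine le_csSup ⟨f + m, ?_⟩ ⟨hA, hord⟩
  rintro k ⟨hk, hkord⟩
  exact hkord ▸ (ordS_le_self _).trans (hk.le_frobenius_add hfmax)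

theorem Generates.coeff_eq_zero_of_inApery (hgen : Generates S g) {lam : Fin ν → ℕ}
    {i : Fin ν} (h : InApery S (g i) (∑ j, lam j * g j)) : lam i = 0 := by
  by_contra hi
  obtain ⟨u, hu, hsum⟩ := hgen.exists_add_eq_sum_mul hi
  exact h.2 u hu hsum

theorem IsMaxRep.apply_le_betaN (hgen : Generates S g) (hg0 : ∀ i, g i ≠ 0)
    (hfmax : ∀ n, f < n → n ∈ S) {lam : Fin ν → ℕ} {ω : ℕ} (h : IsMaxRep S g lam ω)
    (hω : InApery S m ω) (i : Fin ν) : lam i ≤ betaN S m g i := by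
  have hle : Pi.single i (lam i) ≤ lam := single_le_of_le_apply le_rfl
  have hsplit := sum_mul_eq_add_sum_sub_mul hle g
  rw [sum_single_mul, h.1] at hsplit
  rw [hsplit] at hω
  have hi := h.of_le hgen hg0 hle
  rw [sum_single_mul] at hi
  refine le_betaN hfmax (hω.of_add (fun _ ha _ hb => hgen.add_mem ha hb)
    (hi.1 ▸ hgen.sum_mul_mem _) (hgen.sum_mul_mem _)) ?_
  simpa using hi.2.symm

theorem InApery.exists_isMaxRep_le (hgen : MinimalGen S g) (hfmax : ∀ n, f < n → n ∈ S)
    {k : Fin ν} {ω : ℕ} (hω : InApery S (g k) ω) :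
    ∃ lam ≤ Function.update (betaN S (g k) g) k 0, IsMaxRep S g lam ω := by
  obtain ⟨lam, h⟩ := exists_isMaxRep hgen.1 hgen.ne_zero hω.1
  refine ⟨lam, le_update_iff.2 ⟨?_, fun i _ => h.apply_le_betaN hgen.1 hgen.ne_zero hfmax hω i⟩, h⟩
  exact (hgen.1.coeff_eq_zero_of_inApery (h.1 ▸ hω)).le

end Apery

theorem betaRect_max_element_general (S : Set ℕ) {ν : ℕ} [NeZero ν] (g : Fin ν → ℕ)
    (hgen : MinimalGen S g)
    (f : ℕ) (hf : f ∉ S) (hfmax : ∀ n, f < n → n ∈ S)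
    (hrect : AperySet S (g 0) = Bset S (g 0) g) :
    f + g 0 = ∑ i ∈ Finset.univ.erase 0, betaN S (g 0) g i * g i ∧
    (∀ ω, InApery S (g 0) ω → predM S ω (f + g 0)) ∧
    (∀ w, InApery S (g 0) w →
      (∀ t, InApery S (g 0) t → predM S w t → t = w) → w = f + g 0) := by
  set β := Function.update (betaN S (g 0) g) 0 0
  have hfm : InApery S (g 0) (f + g 0) :=
    inApery_frobenius_add (Nat.pos_of_ne_zero (hgen.ne_zero 0)) hf hfmax
  have hβ : InApery S (g 0) (∑ i, β i * g i) :=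
    show _ ∈ AperySet S (g 0) from
      hrect ▸ ⟨β, by simp [β], update_le_self_iff.2 (Nat.zero_le _), rfl⟩
  obtain ⟨μ, hμ0, hμβ, hμ⟩ : f + g 0 ∈ Bset S (g 0) g := hrect ▸ hfm
  have hfm_eq : f + g 0 = ∑ i, β i * g i := by
    have hμ_le : μ ≤ β := le_update_iff.2 ⟨hμ0.le, fun j _ => hμβ j⟩
    exact le_antisymm (hμ ▸ sum_le_sum fun i _ => Nat.mul_le_mul_right _ (hμ_le i))
      (hβ.le_frobenius_add hfmax)
  have hβ_max : IsMaxRep S g β (f + g 0) := by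
    obtain ⟨lam, hle, hlam⟩ := hfm.exists_isMaxRep_le hgen hfmax
    refine ⟨hfm_eq.symm, le_antisymm (hfm_eq ▸ sum_le_ordS hgen.1.mem hgen.ne_zero β) ?_⟩
    exact hlam.2 ▸ sum_le_sum fun i _ => hle i
  have hpred : ∀ ω, InApery S (g 0) ω → predM S ω (f + g 0) := fun ω hω => by
    obtain ⟨lam, hle, hlam⟩ := hω.exists_isMaxRep_le hgen hfmax
    exact hlam.predM_of_le hgen.1 hgen.ne_zero hβ_max hle
  refine ⟨hfm_eq.trans ?_, hpred, fun w hw hmax => (hmax _ hfm (hpred w hw)).symm⟩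
  rw [← sum_erase univ (f := fun i => β i * g i) (a := 0) (by simp [β])]
  exact sum_congr rfl fun i hi => by simp [β, ne_of_mem_erase hi]

theorem betaRect_max_element (S : Set ℕ) {ν : ℕ} [NeZero ν] (g : Fin ν → ℕ) (hν : 2 ≤ ν)
    (hS : IsNumSgp S) (hgen : MinimalGen S g) (hmono : StrictMono g)
    (hmpos : 0 < g 0) (hmul : ∀ s ∈ S, s ≠ 0 → g 0 ≤ s)
    (f : ℕ) (hf : f ∉ S) (hfmax : ∀ n, f < n → n ∈ S)
    (hrect : AperySet S (g 0) = Bset S (g 0) g) :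
    f + g 0 = ∑ i ∈ Finset.univ.erase 0, betaN S (g 0) g i * g i ∧
    (∀ ω, InApery S (g 0) ω → predM S ω (f + g 0)) ∧
    (∀ w, InApery S (g 0) w →
      (∀ t, InApery S (g 0) t → predM S w t → t = w) → w = f + g 0) :=
  betaRect_max_element_general S g hgen f hf hfmax hrect
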